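/- arXiv:2112.04872 — 4 statements merged into one kernel-verified Lean document; each statement's English description precedes it below -/
import Mathlib

section
/- There is a bijection between rook placements on the double staircase 2δ_n and increasing binary trees on n+1 vertices labeled by {1,...,n+1}, given by: the root is labeled 1, and for each block i (the pair of columns 2i-1, 2i), if the left (resp. right) column of block i contains a rook in row j then vertex i has left (resp. right) child labeled j+1, and no left (resp. right) child if that column is empty. -/
/-- Rook placements on the double staircase `2δ_n`: one rook per row (row `i`,
numbered from the top starting at `0`, has `2*(i+1)` cells), at most one rook
per column. -/
def RookPlacement (n : ℕ) :=
  {r : Fin n → Fin (2 * n) //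
    Function.Injective r ∧ ∀ i : Fin n, (r i : ℕ) < 2 * (i.val + 1)}

/-- Increasing binary trees on `n+1` vertices `0, …, n` (vertex `i` carries
label `i+1`): each vertex has at most one left child (`false`) and at most one
right child (`true`), children have larger labels than their parent, and every
non-root vertex has a unique parent. -/
def IncBinTree (n : ℕ) :=
  {c : Fin (n + 1) → Bool → Option (Fin (n + 1)) //
    (∀ u b v, c u b = some v → u < v) ∧
    (∀ v : Fin (n + 1), v ≠ 0 → ∃! p : Fin (n + 1) × Bool, c p.1 p.2 = some v)}

/-!
An increasing binary tree is the same as its parent map: the non-root vertex `j + 1` chooses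
the slot `(u, b)` (side `b` of vertex `u`) it hangs from, subject only to `u ≤ j` and to distinct
vertices choosing distinct slots. Encoding the slot `(u, b)` as the column `2u + b` turns the
condition `u ≤ j` into "column `< 2(j+1)`", i.e. into the shape of row `j` of `2δ_n`, and
distinct slots into distinct columns; so parent maps are exactly rook placements.
-/

namespace Nat

theorem bit_eq_iff {b : Bool} {u c : ℕ} : bit b u = c ↔ b = c.bodd ∧ u = c.div2 := by
  constructor
  · rintro rfl
    simp only [bodd_bit, div2_bit, and_self]
  · rintro ⟨rfl, rfl⟩
    exact bit_bodd_div2 c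

theorem bit_inj {b b' : Bool} {u u' : ℕ} : bit b u = bit b' u' ↔ b = b' ∧ u = u' := by
  rw [bit_eq_iff, bodd_bit, div2_bit]

theorem bit_lt_two_mul_iff {b : Bool} {u k : ℕ} : bit b u < 2 * k ↔ u < k := by
  have := b.toNat_le
  rw [bit_val]
  omega

theorem div2_lt_of_lt_two_mul {c k : ℕ} (h : c < 2 * k) : c.div2 < k := by
  rwa [← bit_lt_two_mul_iff (b := c.bodd), bit_bodd_div2]

end Nat

/-- `parent j` is the slot (vertex, side) under which vertex `j + 1` hangs. -/
@[ext]
structure ParentMap (n : ℕ) where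
  parent : Fin n → Fin (n + 1) × Bool
  injective : Function.Injective parent
  parent_lt : ∀ j, (parent j).1 < j.succ

section

variable {n : ℕ}

namespace IncBinTree

noncomputable def parent (T : IncBinTree n) (j : Fin n) : Fin (n + 1) × Bool :=
  (T.2.2 j.succ j.succ_ne_zero).exists.choose

theorem child_parent (T : IncBinTree n) (j : Fin n) :
    T.1 (T.parent j).1 (T.parent j).2 = some j.succ :=
  (T.2.2 j.succ j.succ_ne_zero).exists.choose_spec

theorem eq_parent_of_child {T : IncBinTree n} {u : Fin (n + 1)} {b : Bool} {j : Fin n}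
    (h : T.1 u b = some j.succ) : (u, b) = T.parent j :=
  (T.2.2 j.succ j.succ_ne_zero).unique h (T.child_parent j)

theorem parent_injective (T : IncBinTree n) : Function.Injective T.parent := fun j j' h =>
  Fin.succ_injective _ <| Option.some_injective _ <| by
    rw [← T.child_parent, h, T.child_parent]

noncomputable def toParentMap (T : IncBinTree n) : ParentMap n :=
  ⟨T.parent, T.parent_injective, fun j => T.2.1 _ _ _ (T.child_parent j)⟩

end IncBinTree

namespace ParentMap

noncomputable def child (p : ParentMap n) (u : Fin (n + 1)) (b : Bool) : Option (Fin (n + 1)) :=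
  (Function.partialInv p.parent (u, b)).map Fin.succ

theorem child_eq_some_iff {p : ParentMap n} {u v : Fin (n + 1)} {b : Bool} :
    p.child u b = some v ↔ ∃ j, p.parent j = (u, b) ∧ j.succ = v := by
  simp only [child, Option.map_eq_some_iff, p.injective.isPartialInv _ _]

noncomputable def toIncBinTree (p : ParentMap n) : IncBinTree n :=
  ⟨p.child, by
    rintro u b _ h
    obtain ⟨j, hj, rfl⟩ := child_eq_some_iff.1 h
    simpa only [hj] using p.parent_lt j, by
    intro v hv
    obtain ⟨j, rfl⟩ := Fin.exists_succ_eq.2 hv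
    refine ⟨p.parent j, child_eq_some_iff.2 ⟨j, rfl, rfl⟩, fun s hs => ?_⟩
    obtain ⟨j', hj', hjj'⟩ := child_eq_some_iff.1 hs
    rw [← Fin.succ_injective _ hjj', hj']⟩

end ParentMap

noncomputable def IncBinTree.equivParentMap : IncBinTree n ≃ ParentMap n where
  toFun := IncBinTree.toParentMap
  invFun := ParentMap.toIncBinTree
  left_inv T := by
    refine Subtype.ext <| funext₂ fun u b => Option.ext fun v => ?_
    refine ParentMap.child_eq_some_iff.trans ⟨?_, fun h => ?_⟩
    · rintro ⟨j, hj, rfl⟩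
      simpa only [show T.parent j = (u, b) from hj] using T.child_parent j
    · obtain ⟨j, rfl⟩ := Fin.exists_succ_eq.2 (Fin.ne_zero_of_lt (T.2.1 u b v h))
      exact ⟨j, (IncBinTree.eq_parent_of_child h).symm, rfl⟩
  right_inv p := ParentMap.ext <| funext fun j =>
    (IncBinTree.eq_parent_of_child (ParentMap.child_eq_some_iff.2 ⟨j, rfl, rfl⟩)).symm

namespace RookPlacement

def slot (R : RookPlacement n) (j : Fin n) : Fin (n + 1) × Bool :=
  (⟨(R.1 j : ℕ).div2, (Nat.div2_lt_of_lt_two_mul (R.2.2 j)).trans_le (by omega)⟩,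
    (R.1 j : ℕ).bodd)

theorem slot_eq_iff {R : RookPlacement n} {j : Fin n} {u : Fin (n + 1)} {b : Bool} :
    R.slot j = (u, b) ↔ (R.1 j : ℕ) = Nat.bit b u := by
  rw [eq_comm (b := Nat.bit b u), Nat.bit_eq_iff, slot, Prod.mk.injEq, Fin.ext_iff, and_comm]
  simp only [eq_comm]

theorem bit_slot (R : RookPlacement n) (j : Fin n) :
    Nat.bit (R.slot j).2 (R.slot j).1 = R.1 j :=
  (slot_eq_iff.1 rfl).symm

def toParentMap (R : RookPlacement n) : ParentMap n :=
  ⟨R.slot, fun j j' h => R.2.1 <| Fin.ext <| by rw [← R.bit_slot, ← R.bit_slot, h],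
    fun j => Nat.div2_lt_of_lt_two_mul (R.2.2 j)⟩

end RookPlacement

def ParentMap.toRookPlacement (p : ParentMap n) : RookPlacement n :=
  ⟨fun j => ⟨Nat.bit (p.parent j).2 (p.parent j).1,
      (Nat.bit_lt_two_mul_iff.2 (p.parent_lt j)).trans_le (Nat.mul_le_mul_left 2 j.2)⟩,
    fun j j' h => p.injective <| by
      obtain ⟨hb, hu⟩ := Nat.bit_inj.1 (Fin.val_eq_of_eq h)
      exact Prod.ext (Fin.ext hu) hb,
    fun j => Nat.bit_lt_two_mul_iff.2 (p.parent_lt j)⟩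

theorem ParentMap.slot_toRookPlacement (p : ParentMap n) (j : Fin n) :
    p.toRookPlacement.slot j = p.parent j :=
  RookPlacement.slot_eq_iff.2 rfl

def RookPlacement.equivParentMap : RookPlacement n ≃ ParentMap n where
  toFun := RookPlacement.toParentMap
  invFun := ParentMap.toRookPlacement
  left_inv R := Subtype.ext <| funext fun j => Fin.ext (R.bit_slot j)
  right_inv p := ParentMap.ext <| funext p.slot_toRookPlacement
end

/-- There is a bijection between rook placements on `2δ_n` and increasing
binary trees on `n+1` vertices, given by: the root is (the vertex labelled) `1`,
and vertex `i` has left (resp. right) child `j+1` exactly when the left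
(resp. right) column of block `i` contains a rook in row `j`.
(Here vertices are `0`-indexed: vertex `u : Fin (n+1)` has label `u+1`, block
`u` consists of columns `2u` and `2u+1` (0-indexed), and rows are `0`-indexed.) -/
theorem rook_placements_equiv_increasing_binary_trees (n : ℕ) :
    ∃ e : RookPlacement n ≃ IncBinTree n,
      ∀ (R : RookPlacement n) (u v : Fin (n + 1)) (b : Bool),
        (e R).1 u b = some v ↔
          ∃ j : Fin n, (R.1 j : ℕ) = 2 * u.val + (if b then 1 else 0) ∧
            v.val = j.val + 1 := by
  refine ⟨RookPlacement.equivParentMap.trans IncBinTree.equivParentMap.symm, fun R u v b => ?_⟩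
  refine ParentMap.child_eq_some_iff.trans (exists_congr fun j => and_congr ?_ ?_)
  · refine RookPlacement.slot_eq_iff.trans ?_
    rw [Nat.bit_val]
    cases b <;> rfl
  · rw [Fin.ext_iff, Fin.val_succ, eq_comm]
end

section
/- The number of left-aligned rook placements on 2δ_n with exactly k blocks containing one rook equals the number of right-aligned rook placements on 2δ_n with exactly k blocks containing one rook. -/
/-- Column `c` (0-indexed) of the rook placement `R` contains a rook. -/
def Occupied {n : ℕ} (R : RookPlacement n) (c : ℕ) : Prop :=
  ∃ j : Fin n, (R.1 j : ℕ) = c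

/-- The number of rooks in block `i` of `R` (block `i` consists of the two
columns `2i` and `2i+1`, 0-indexed). -/
def blockRooks {n : ℕ} (R : RookPlacement n) (i : Fin n) : ℕ :=
  (Finset.univ.filter (fun j : Fin n => (R.1 j : ℕ) / 2 = i.val)).card

/-- `R` is left-aligned: no block has a rook in its right column without a rook
in its left column. -/
def LeftAligned {n : ℕ} (R : RookPlacement n) : Prop :=
  ∀ i : Fin n, Occupied R (2 * i.val + 1) → Occupied R (2 * i.val)

/-- `R` is right-aligned: no block has a rook in its left column without a rook
in its right column. -/
def RightAligned {n : ℕ} (R : RookPlacement n) : Prop :=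
  ∀ i : Fin n, Occupied R (2 * i.val) → Occupied R (2 * i.val + 1)

/-- `bor R` is the number of blocks of `R` containing exactly one rook. -/
def bor {n : ℕ} (R : RookPlacement n) : ℕ :=
  (Finset.univ.filter (fun i : Fin n => blockRooks R i = 1)).card

/-!
Moving the rook of every block that holds exactly one rook to the other column of its block is
an involution of rook placements that preserves the number of rooks in each block, hence `bor`.
A placement is left-aligned iff every such lone rook stands in the left (even) column of its
block, and right-aligned iff it stands in the right one, so the involution exchanges the two
classes.
-/

/-- `partner (2 * b) = 2 * b + 1` and `partner (2 * b + 1) = 2 * b`. -/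
def partner (c : ℕ) : ℕ := 2 * (c / 2) + (1 - c % 2)

lemma partner_div_two (c : ℕ) : partner c / 2 = c / 2 := by
  unfold partner; omega

lemma partner_mod_two (c : ℕ) : partner c % 2 = 1 - c % 2 := by
  unfold partner; omega

lemma partner_involutive : Function.Involutive partner := by
  intro c; unfold partner; omega

def swapBlocks (s : ℕ → Prop) [DecidablePred s] (c : ℕ) : ℕ :=
  if s (c / 2) then partner c else c

section swapBlocks

variable (s : ℕ → Prop) [DecidablePred s]

lemma swapBlocks_div_two (c : ℕ) : swapBlocks s c / 2 = c / 2 := by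
  unfold swapBlocks; split_ifs <;> simp only [partner_div_two]

lemma swapBlocks_of_pos {c : ℕ} (h : s (c / 2)) : swapBlocks s c = partner c := if_pos h

lemma swapBlocks_involutive : Function.Involutive (swapBlocks s) := by
  intro c
  by_cases h : s (c / 2)
  · rw [swapBlocks_of_pos s h, swapBlocks_of_pos s (by rwa [partner_div_two]),
      partner_involutive]
  · simp only [swapBlocks, if_neg h]

lemma swapBlocks_lt_two_mul {c m : ℕ} (h : c < 2 * m) : swapBlocks s c < 2 * m := by
  unfold swapBlocks partner; split_ifs <;> omega

end swapBlocks

namespace RookPlacement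

variable {n : ℕ} (R : RookPlacement n)

/-- Indexed by `ℕ`, so that the block `c / 2` of a column `c` needs no bound proof. -/
def rowsInBlock (b : ℕ) : Finset (Fin n) :=
  Finset.univ.filter (fun j : Fin n => (R.1 j : ℕ) / 2 = b)

def rooksInBlock (b : ℕ) : ℕ := (R.rowsInBlock b).card

lemma mem_rowsInBlock {j : Fin n} {b : ℕ} : j ∈ R.rowsInBlock b ↔ (R.1 j : ℕ) / 2 = b := by
  simp [rowsInBlock]

lemma blockRooks_eq_rooksInBlock (i : Fin n) : blockRooks R i = R.rooksInBlock i := rfl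

lemma occupied_partner_iff (j : Fin n) :
    Occupied R (partner (R.1 j)) ↔ R.rooksInBlock (R.1 j / 2) ≠ 1 := by
  have hj : j ∈ R.rowsInBlock (R.1 j / 2) := R.mem_rowsInBlock.mpr rfl
  constructor
  · rintro ⟨j', hj'⟩ hlone
    have hj'_mem : j' ∈ R.rowsInBlock (R.1 j / 2) := by
      rw [mem_rowsInBlock, hj', partner_div_two]
    have hjj' := Finset.card_le_one.mp hlone.le j hj j' hj'_mem
    have := partner_mod_two (R.1 j)
    subst hjj'
    omega
  · intro hnot
    have hpos : 0 < R.rooksInBlock (R.1 j / 2) := Finset.card_pos.mpr ⟨j, hj⟩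
    obtain ⟨j', hj'_mem, hne⟩ :=
      Finset.exists_mem_ne (s := R.rowsInBlock (R.1 j / 2)) (by unfold rooksInBlock at *; omega) j
    rw [mem_rowsInBlock] at hj'_mem
    have hval : (R.1 j' : ℕ) ≠ R.1 j := fun h => hne (R.2.1 (Fin.ext h))
    exact ⟨j', by unfold partner; omega⟩

lemma forall_occupied_imp_occupied_iff {p : ℕ} (hp : p < 2) :
    (∀ i : Fin n, Occupied R (2 * i + p) → Occupied R (2 * i + (1 - p))) ↔
      ∀ j, R.rooksInBlock (R.1 j / 2) = 1 → (R.1 j : ℕ) % 2 ≠ p := by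
  constructor
  · intro h j hlone hparity
    have hcol : (R.1 j : ℕ) = 2 * (R.1 j / 2 : ℕ) + p := by omega
    have hblock : (R.1 j : ℕ) / 2 < n := by have := (R.1 j).2; omega
    have hocc := h ⟨_, hblock⟩ ⟨j, hcol⟩
    rw [show 2 * (R.1 j / 2 : ℕ) + (1 - p) = partner (R.1 j) by unfold partner; omega,
      occupied_partner_iff] at hocc
    exact hocc hlone
  · rintro h i ⟨j, hj⟩
    have hpartner : partner (R.1 j) = 2 * i + (1 - p) := by unfold partner; omega
    rw [← hpartner, occupied_partner_iff]
    exact fun hlone => h j hlone (by omega)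

lemma leftAligned_iff :
    LeftAligned R ↔ ∀ j, R.rooksInBlock (R.1 j / 2) = 1 → (R.1 j : ℕ) % 2 = 0 := by
  simpa [LeftAligned] using R.forall_occupied_imp_occupied_iff (p := 1) (by norm_num)

lemma rightAligned_iff :
    RightAligned R ↔ ∀ j, R.rooksInBlock (R.1 j / 2) = 1 → (R.1 j : ℕ) % 2 = 1 := by
  simpa [RightAligned] using R.forall_occupied_imp_occupied_iff (p := 0) (by norm_num)

def flipLoneRooks : RookPlacement n :=
  ⟨fun j => ⟨swapBlocks (R.rooksInBlock · = 1) (R.1 j),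
      swapBlocks_lt_two_mul _ (R.1 j).2⟩,
    fun _ _ h => R.2.1 (Fin.ext ((swapBlocks_involutive (R.rooksInBlock · = 1)).injective
      (congrArg Fin.val h))),
    fun j => swapBlocks_lt_two_mul (R.rooksInBlock · = 1) (R.2.2 j)⟩

lemma flipLoneRooks_apply (j : Fin n) :
    (R.flipLoneRooks.1 j : ℕ) = swapBlocks (R.rooksInBlock · = 1) (R.1 j) := rfl

lemma rowsInBlock_flipLoneRooks : R.flipLoneRooks.rowsInBlock = R.rowsInBlock := by
  ext b j
  rw [mem_rowsInBlock, mem_rowsInBlock, flipLoneRooks_apply, swapBlocks_div_two]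

lemma rooksInBlock_flipLoneRooks : R.flipLoneRooks.rooksInBlock = R.rooksInBlock := by
  funext b
  rw [rooksInBlock, rowsInBlock_flipLoneRooks, rooksInBlock]

lemma bor_flipLoneRooks : bor R.flipLoneRooks = bor R := by
  unfold bor
  congr 1
  refine Finset.filter_congr fun i _ => ?_
  rw [blockRooks_eq_rooksInBlock, blockRooks_eq_rooksInBlock, rooksInBlock_flipLoneRooks]

lemma flipLoneRooks_involutive : Function.Involutive (flipLoneRooks (n := n)) := by
  intro R
  apply Subtype.ext
  funext j
  apply Fin.ext
  rw [flipLoneRooks_apply, rooksInBlock_flipLoneRooks, flipLoneRooks_apply,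
    swapBlocks_involutive]

lemma rightAligned_flipLoneRooks_iff : RightAligned R.flipLoneRooks ↔ LeftAligned R := by
  rw [rightAligned_iff, leftAligned_iff, rooksInBlock_flipLoneRooks]
  refine forall_congr' fun j => ?_
  rw [flipLoneRooks_apply, swapBlocks_div_two]
  refine imp_congr_right fun hlone => ?_
  rw [swapBlocks_of_pos _ hlone, partner_mod_two]
  omega

end RookPlacement

open RookPlacement in
/-- The number of left-aligned rook placements on `2δ_n` with exactly `k`
blocks containing one rook equals the number of right-aligned rook placements
on `2δ_n` with exactly `k` blocks containing one rook. -/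
theorem left_aligned_card_eq_right_aligned_card (n k : ℕ) :
    Nat.card {R : RookPlacement n // LeftAligned R ∧ bor R = k} =
      Nat.card {R : RookPlacement n // RightAligned R ∧ bor R = k} := by
  refine Nat.card_congr ((flipLoneRooks_involutive.toPerm _).subtypeEquiv fun R => ?_)
  rw [Function.Involutive.coe_toPerm, rightAligned_flipLoneRooks_iff, bor_flipLoneRooks]
end

section
/- Σ_{S} 2^{bso(S)} = (n+1)!, where the sum is over rook placements S in Λ_n-type Young diagrams that arise as images of the column-deletion projection Π_n from rook placements on 2δ_n (equivalently, over full rook placements on Young diagrams fitting in an n×n box with one rook per row and column, all of whose blocks have size at most 2), and bso(S) is the number of blocks of size 1 in S. -/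
/-- A full rook placement on a Young diagram with `n` rows fitting in an
`n × n` box (drawn in French notation).  `p.1 i` is the length of row `i`
(rows numbered from the top, so `p.1` is monotone) and `p.2 i` is the
(0-indexed) column of the rook of row `i`; there is exactly one rook in each
row and in each column (`p.2` is a bijection). -/
abbrev FullPlacement (n : ℕ) :=
  {p : (Fin n → Fin (n + 1)) × (Fin n → Fin n) //
    (∀ i j : Fin n, i ≤ j → p.1 i ≤ p.1 j) ∧ Function.Bijective p.2 ∧
      ∀ i : Fin n, (p.2 i : ℕ) < (p.1 i : ℕ)}

/-- The height of column `c` of the Young diagram underlying `S`. -/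
def colHeight {n : ℕ} (S : FullPlacement n) (c : Fin n) : ℕ :=
  (Finset.univ.filter (fun i : Fin n => (c : ℕ) < (S.1.1 i : ℕ))).card

/-- The size of the block (maximal set of columns of equal height) containing
column `c`. -/
def blockSize {n : ℕ} (S : FullPlacement n) (c : Fin n) : ℕ :=
  (Finset.univ.filter (fun c' : Fin n => colHeight S c' = colHeight S c)).card

/-- `bso S` is the number of blocks of size `1` of `S`. -/
def bso {n : ℕ} (S : FullPlacement n) : ℕ :=
  (Finset.univ.filter (fun c : Fin n => blockSize S c = 1)).card

attribute [local instance] Classical.propDecidable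

/-!
A column of height `h` in the image of `Π_n` can only come from one of the two columns
`2 (n - h)` and `2 (n - h) + 1` of `2δ_n`, which form the block of `2δ_n` of that height.
When `S` has two columns of height `h`, they fill this pair in order; a block of size one
may come from either column. So the fibre of `Π_n` over `S` has `2 ^ bso S` elements.
Summing over `S` counts the rook placements on `2δ_n`. There are `∏ i < n, (i + 2) = (n + 1)!`
of those, since row `i` has `2 (i + 1)` cells, and `i` of their columns are already taken by
the rooks of the rows above it.
-/

section

-- Otherwise the classical instance wins over `Nat.decLt` and friends in the filters below,
-- which then no longer match the filters in `colHeight` and `blockSize`.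
attribute [-instance] Classical.propDecidable

open Finset Function
open scoped Nat

theorem Fin.card_filter_le_val {n : ℕ} (m : ℕ) : #{i : Fin n | m ≤ (i : ℕ)} = n - m := by
  have h := card_filter_add_card_filter_not (s := (univ : Finset (Fin n))) (fun i => (i : ℕ) < m)
  simp only [not_lt, Fin.card_filter_val_lt, card_univ, Fintype.card_fin] at h
  omega

theorem Fin.card_filter_val_comp_lt {n m : ℕ} {σ : Fin n → Fin n} (hσ : Bijective σ)
    (hm : m ≤ n) : #{k | (σ k : ℕ) < m} = m := by
  rw [card_bijective σ hσ (t := {c : Fin n | (c : ℕ) < m}) (by simp), Fin.card_filter_val_lt,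
    min_eq_right hm]

theorem Fin.prod_univ_val_add_two (n : ℕ) : ∏ i : Fin n, ((i : ℕ) + 2) = (n + 1)! := by
  induction n with
  | zero => rfl
  | succ n ih =>
    rw [Fin.prod_univ_castSucc, Nat.factorial_succ (n + 1)]
    simp only [Fin.val_castSucc, Fin.val_last, ih]
    ring

section Rank

variable {ι α : Type*} [Fintype ι] [LinearOrder α]

theorem card_filter_lt_lt_card_filter_lt_iff (r : ι → α) (j : ι) (x : α) :
    #{k | r k < r j} < #{k | r k < x} ↔ r j < x := by
  refine ⟨fun h => not_le.1 fun hx => h.not_ge ?_, fun hx => card_lt_card ?_⟩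
  · exact card_le_card fun k => by simpa using fun hk => hk.trans_le hx
  · exact (ssubset_iff_of_subset fun k => by simpa using fun hk => hk.trans hx).2
      ⟨j, by simpa using hx, by simp⟩

theorem injective_card_filter_lt {r : ι → α} (hr : Injective r) :
    Injective fun j => #{k | r k < r j} := by
  intro a b h
  by_contra hne
  rcases lt_or_gt_of_ne (hr.ne hne) with hlt | hlt
  · exact ((card_filter_lt_lt_card_filter_lt_iff r a (r b)).2 hlt).ne h
  · exact ((card_filter_lt_lt_card_filter_lt_iff r b (r a)).2 hlt).ne' h

end Rank

section PairsOfColumns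

variable {ι : Type*} [Fintype ι] {r : ι → ℕ}

theorem card_filter_div_two_eq_le_two (hr : Injective r) (b : ℕ) : #{k | r k / 2 = b} ≤ 2 :=
  calc #{k | r k / 2 = b} ≤ #(Ico (2 * b) (2 * b + 2)) :=
        card_le_card_of_injOn r (fun k hk => by simp at hk ⊢; omega) hr.injOn
    _ = 2 := by simp

theorem card_filter_lt_and_div_two_eq_mod_two (hr : Injective r) (j : ι)
    (h : #{k | r k / 2 = r j / 2} = 2) : #{k | r k < r j ∧ r k / 2 = r j / 2} = r j % 2 := by
  rcases Nat.mod_two_eq_zero_or_one (r j) with heven | hodd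
  · rw [heven, card_eq_zero, filter_eq_empty_iff]
    rintro k - ⟨hlt, hdiv⟩
    omega
  · rw [hodd]
    refine le_antisymm ?_ ?_
    · refine Nat.lt_succ_iff.1 <|
        (card_lt_card ((ssubset_iff_of_subset ?_).2 ⟨j, by simp, by simp⟩)).trans_eq h
      intro k
      simp only [mem_filter, mem_univ, true_and]
      exact And.right
    · obtain ⟨k, hk, hkj⟩ := exists_mem_ne (h ▸ one_lt_two) j
      have := hr.ne hkj
      simp only [mem_filter, mem_univ, true_and] at hk
      exact card_pos.2 ⟨k, by simp only [mem_filter, mem_univ, true_and]; omega⟩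

end PairsOfColumns

section InjectiveTuples

variable {α : Type*} [Fintype α] [DecidableEq α]

def injectiveTupleSnocEquiv {n : ℕ} (A : Fin (n + 1) → Finset α) :
    {f : Fin (n + 1) → α // Injective f ∧ ∀ i, f i ∈ A i} ≃
      Σ g : {g : Fin n → α // Injective g ∧ ∀ i, g i ∈ A i.castSucc},
        {a // a ∈ A (Fin.last n) \ univ.image g.1} where
  toFun f := ⟨⟨Fin.init f.1, f.2.1.comp (Fin.castSucc_injective n), fun i => f.2.2 _⟩,
    ⟨f.1 (Fin.last n), by
      simp only [mem_sdiff, mem_image, mem_univ, true_and, not_exists]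
      exact ⟨f.2.2 _, fun i h => (Fin.castSucc_lt_last i).ne (f.2.1 h)⟩⟩⟩
  invFun g := ⟨Fin.snoc g.1.1 g.2.1, by
    obtain ⟨⟨g, hg, hgA⟩, a, ha⟩ := g
    simp only [mem_sdiff, mem_image, mem_univ, true_and, not_exists] at ha
    refine ⟨Fin.snoc_injective_iff.2 ⟨hg, fun ⟨i, hi⟩ => ha.2 i hi⟩,
      Fin.lastCases ?_ ?_⟩
    · simpa using ha.1
    · intro i
      simpa using hgA i⟩
  left_inv f := by simp
  right_inv g := Sigma.subtype_ext (Subtype.ext (Fin.init_snoc (α := fun _ => α) _ _))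
    (Fin.snoc_last (α := fun _ => α) _ _)

theorem card_injective_tuple_mem :
    ∀ {n : ℕ} (A : Fin n → Finset α), Monotone A →
      Fintype.card {f : Fin n → α // Injective f ∧ ∀ i, f i ∈ A i} = ∏ i, (#(A i) - i)
  | 0, _, _ => Fintype.card_eq_one_iff.2
      ⟨⟨finZeroElim, fun i => i.elim0, fun i => i.elim0⟩,
        fun _ => Subtype.ext (funext (·.elim0))⟩
  | n + 1, A, hA => by
    have hfiber (g : {g : Fin n → α // Injective g ∧ ∀ i, g i ∈ A i.castSucc}) :
        #(A (Fin.last n) \ univ.image g.1) = #(A (Fin.last n)) - n := by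
      rw [card_sdiff_of_subset, card_image_of_injective _ g.2.1, card_fin]
      intro _ h
      obtain ⟨i, -, rfl⟩ := mem_image.1 h
      exact hA (Fin.le_last _) (g.2.2 i)
    rw [Fintype.card_congr (injectiveTupleSnocEquiv A), Fintype.card_sigma]
    simp only [Fintype.card_coe, hfiber, sum_const, card_univ, smul_eq_mul,
      Fin.prod_univ_castSucc, Fin.val_last, Fin.val_castSucc]
    rw [card_injective_tuple_mem (fun i => A i.castSucc) (hA.comp Fin.strictMono_castSucc.monotone)]

end InjectiveTuples

namespace RookPlacement

variable {n : ℕ}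

instance : Fintype (RookPlacement n) := Subtype.fintype _

theorem card_eq_factorial : Fintype.card (RookPlacement n) = (n + 1)! := by
  let A : Fin n → Finset (Fin (2 * n)) := fun i => {c | (c : ℕ) < 2 * (i + 1)}
  have hA : Monotone A := fun i i' hii' c => by
    have := Fin.le_def.1 hii'
    simp only [A, mem_filter, mem_univ, true_and]
    omega
  have hcard (i : Fin n) : #(A i) = 2 * (i + 1) := by
    simp only [A, Fin.card_filter_val_lt]
    omega
  calc Fintype.card (RookPlacement n)
      = Fintype.card {f : Fin n → Fin (2 * n) // Injective f ∧ ∀ i, f i ∈ A i} :=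
        Fintype.card_congr (Equiv.subtypeEquivRight fun f => by simp [A])
    _ = ∏ i : Fin n, ((i : ℕ) + 2) := by
        rw [card_injective_tuple_mem A hA]
        exact prod_congr rfl fun i _ => by rw [hcard]; omega
    _ = (n + 1)! := Fin.prod_univ_val_add_two n

variable (R : RookPlacement n)

theorem val_injective : Injective fun j => (R.1 j : ℕ) :=
  Fin.val_injective.comp R.2.1

/-- The projection `Π_n`. -/
def deleteEmptyColumns : FullPlacement n :=
  ⟨(fun i => ⟨#{k | (R.1 k : ℕ) < 2 * (i + 1)},
      Nat.lt_succ_of_le ((card_le_univ _).trans_eq (Fintype.card_fin n))⟩,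
    fun j => ⟨#{k | (R.1 k : ℕ) < R.1 j},
      (card_lt_univ_of_notMem (x := j) (by simp)).trans_eq (Fintype.card_fin n)⟩),
   fun i i' hii' => Fin.mk_le_mk.2 <| card_le_card fun k => by
      have := Fin.le_def.1 hii'
      simp only [mem_filter, mem_univ, true_and]
      omega,
   Finite.injective_iff_bijective.1 fun a b h =>
      injective_card_filter_lt R.val_injective (Fin.mk.inj_iff.1 h),
   fun j => (card_filter_lt_lt_card_filter_lt_iff _ j _).2 (R.2.2 j)⟩

theorem deleteEmptyColumns_rook_lt_iff (k j : Fin n) :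
    R.deleteEmptyColumns.1.2 k < R.deleteEmptyColumns.1.2 j ↔ (R.1 k : ℕ) < R.1 j :=
  card_filter_lt_lt_card_filter_lt_iff _ k _

theorem colHeight_deleteEmptyColumns (j : Fin n) :
    colHeight R.deleteEmptyColumns (R.deleteEmptyColumns.1.2 j) = n - (R.1 j : ℕ) / 2 := by
  rw [colHeight, ← Fin.card_filter_le_val]
  congr 1
  ext i
  simp only [mem_filter, mem_univ, true_and]
  refine (card_filter_lt_lt_card_filter_lt_iff _ j _).trans ?_
  omega

theorem blockSize_deleteEmptyColumns (j : Fin n) :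
    blockSize R.deleteEmptyColumns (R.deleteEmptyColumns.1.2 j) =
      #{k | (R.1 k : ℕ) / 2 = (R.1 j : ℕ) / 2} := by
  refine (card_bijective _ R.deleteEmptyColumns.2.2.1 fun k => ?_).symm
  simp only [mem_filter, mem_univ, true_and, colHeight_deleteEmptyColumns]
  have := (R.1 k).2
  have := (R.1 j).2
  omega

theorem blockSize_deleteEmptyColumns_le_two (c : Fin n) :
    blockSize R.deleteEmptyColumns c ≤ 2 := by
  obtain ⟨j, rfl⟩ := R.deleteEmptyColumns.2.2.1.2 c
  rw [blockSize_deleteEmptyColumns]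
  exact card_filter_div_two_eq_le_two R.val_injective _

end RookPlacement

section FullPlacement

variable {n : ℕ} (S : FullPlacement n)

theorem colHeight_le (c : Fin n) : colHeight S c ≤ n :=
  (card_le_univ _).trans_eq (Fintype.card_fin n)

theorem colHeight_antitone : Antitone (colHeight S) := fun c c' hcc' =>
  card_le_card fun i => by
    have := Fin.le_def.1 hcc'
    simp only [mem_filter, mem_univ, true_and]
    omega

theorem sub_colHeight_le_iff (c i : Fin n) : n - colHeight S c ≤ i ↔ (c : ℕ) < S.1.1 i := by
  have hsum := card_filter_add_card_filter_not (s := univ) (fun i => (S.1.1 i : ℕ) ≤ c)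
  have hshort := Fin.lt_card_filter_univ_iff_apply_of_imp (j := i) (fun i => (S.1.1 i : ℕ) ≤ c)
    fun a b hba ha => (Fin.le_def.1 (S.2.1 b a hba)).trans ha
  simp only [not_le, card_univ, Fintype.card_fin] at hsum
  rw [colHeight]
  omega

def posInBlock (c : Fin n) : ℕ := #{c' | c' < c ∧ colHeight S c' = colHeight S c}

theorem posInBlock_lt_blockSize (c : Fin n) : posInBlock S c < blockSize S c :=
  card_lt_card <| (ssubset_iff_of_subset fun c' => by simp +contextual).2 ⟨c, by simp, by simp⟩

theorem posInBlock_lt_posInBlock {c c' : Fin n} (hcc' : c < c')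
    (h : colHeight S c = colHeight S c') : posInBlock S c < posInBlock S c' := by
  refine card_lt_card <| (ssubset_iff_of_subset fun d => ?_).2 ⟨c, by simp [hcc', h], by simp⟩
  simp only [mem_filter, mem_univ, true_and]
  exact fun hd => ⟨hd.1.trans hcc', hd.2.trans h⟩

theorem two_le_blockSize {c c' : Fin n} (hne : c ≠ c') (h : colHeight S c = colHeight S c') :
    2 ≤ blockSize S c' :=
  (card_pair hne).symm.le.trans <| card_le_card fun d => by
    simp only [mem_insert, mem_singleton, mem_filter, mem_univ, true_and]
    rintro (rfl | rfl) <;> simp [h]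

end FullPlacement

section InsertEmptyColumns

variable {n : ℕ} (S : FullPlacement n) (f : {c : Fin n // blockSize S c = 1} → Bool)

def colOffset (c : Fin n) : ℕ :=
  if h : blockSize S c = 1 then (f ⟨c, h⟩).toNat else posInBlock S c

/-- Column `c` of `S`, of height `h`, goes back to column `2 (n - h)` or `2 (n - h) + 1` of
`2δ_n`: by its position in its block if that block has two columns, by `f` otherwise. -/
def liftCol (c : Fin n) : ℕ := 2 * (n - colHeight S c) + colOffset S f c

variable {S} (hS : ∀ c, blockSize S c ≤ 2)
include hS

theorem colOffset_le_one (c : Fin n) : colOffset S f c ≤ 1 := by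
  unfold colOffset
  split_ifs
  · exact Bool.toNat_le _
  · have := posInBlock_lt_blockSize S c
    have := hS c
    omega

theorem liftCol_strictMono : StrictMono (liftCol S f) := by
  intro c c' hcc'
  have := colHeight_le S c
  have := colOffset_le_one f hS c
  rcases (colHeight_antitone S hcc'.le).lt_or_eq with hlt | heq
  · unfold liftCol
    omega
  · have hc : blockSize S c ≠ 1 := by have := two_le_blockSize S hcc'.ne' heq; omega
    have hc' : blockSize S c' ≠ 1 := by have := two_le_blockSize S hcc'.ne heq.symm; omega
    unfold liftCol colOffset
    rw [dif_neg hc, dif_neg hc', heq]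
    exact Nat.add_lt_add_left (posInBlock_lt_posInBlock S hcc' heq.symm) _

theorem liftCol_lt_iff (c i : Fin n) : liftCol S f c < 2 * (i + 1) ↔ (c : ℕ) < S.1.1 i := by
  rw [← sub_colHeight_le_iff]
  have := colOffset_le_one f hS c
  unfold liftCol
  omega

def insertEmptyColumns : RookPlacement n :=
  ⟨fun j => ⟨liftCol S f (S.1.2 j), by
      have := (liftCol_lt_iff f hS (S.1.2 j) j).2 (S.2.2.2 j)
      omega⟩,
    fun a b h => S.2.2.1.1 ((liftCol_strictMono f hS).injective (Fin.mk.inj_iff.1 h)),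
    fun j => (liftCol_lt_iff f hS (S.1.2 j) j).2 (S.2.2.2 j)⟩

theorem deleteEmptyColumns_insertEmptyColumns :
    (insertEmptyColumns f hS).deleteEmptyColumns = S := by
  refine Subtype.ext (Prod.ext (funext fun i => Fin.ext ?_) (funext fun j => Fin.ext ?_))
  · change #{k | liftCol S f (S.1.2 k) < 2 * (i + 1)} = S.1.1 i
    simp only [liftCol_lt_iff f hS]
    exact Fin.card_filter_val_comp_lt S.2.2.1 (Nat.lt_succ_iff.1 (S.1.1 i).2)
  · change #{k | liftCol S f (S.1.2 k) < liftCol S f (S.1.2 j)} = S.1.2 j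
    simp only [(liftCol_strictMono f hS).lt_iff_lt, Fin.lt_def]
    exact Fin.card_filter_val_comp_lt S.2.2.1 (S.1.2 j).2.le

end InsertEmptyColumns

namespace RookPlacement

variable {n : ℕ} (R : RookPlacement n)

def inRightColumn (c : Fin n) : Bool :=
  decide (∃ j, R.deleteEmptyColumns.1.2 j = c ∧ (R.1 j : ℕ) % 2 = 1)

theorem posInBlock_deleteEmptyColumns (j : Fin n) :
    posInBlock R.deleteEmptyColumns (R.deleteEmptyColumns.1.2 j) =
      #{k | (R.1 k : ℕ) < R.1 j ∧ (R.1 k : ℕ) / 2 = (R.1 j : ℕ) / 2} := by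
  refine (card_bijective _ R.deleteEmptyColumns.2.2.1 fun k => ?_).symm
  simp only [mem_filter, mem_univ, true_and, colHeight_deleteEmptyColumns,
    deleteEmptyColumns_rook_lt_iff]
  have := (R.1 k).2
  have := (R.1 j).2
  omega

theorem colOffset_deleteEmptyColumns (j : Fin n) :
    colOffset R.deleteEmptyColumns (fun c => R.inRightColumn c) (R.deleteEmptyColumns.1.2 j) =
      (R.1 j : ℕ) % 2 := by
  unfold colOffset
  split_ifs with hone
  · simp only [inRightColumn, R.deleteEmptyColumns.2.2.1.1.eq_iff, exists_eq_left]
    rcases Nat.mod_two_eq_zero_or_one (R.1 j : ℕ) with h | h <;> simp [h]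
  · rw [posInBlock_deleteEmptyColumns]
    refine card_filter_lt_and_div_two_eq_mod_two R.val_injective j ?_
    rw [blockSize_deleteEmptyColumns] at hone
    have := card_filter_div_two_eq_le_two R.val_injective ((R.1 j : ℕ) / 2)
    have : 0 < #{k | (R.1 k : ℕ) / 2 = (R.1 j : ℕ) / 2} := card_pos.2 ⟨j, by simp⟩
    omega

theorem insertEmptyColumns_deleteEmptyColumns :
    insertEmptyColumns (S := R.deleteEmptyColumns) (fun c => R.inRightColumn c)
      R.blockSize_deleteEmptyColumns_le_two = R := by
  refine Subtype.ext (funext fun j => Fin.ext ?_)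
  change liftCol R.deleteEmptyColumns _ (R.deleteEmptyColumns.1.2 j) = R.1 j
  rw [liftCol, colHeight_deleteEmptyColumns, colOffset_deleteEmptyColumns]
  have := (R.1 j).2
  omega

end RookPlacement

theorem inRightColumn_insertEmptyColumns {n : ℕ} {S : FullPlacement n}
    (hS : ∀ c, blockSize S c ≤ 2) (f : {c : Fin n // blockSize S c = 1} → Bool) (c : Fin n)
    (hc : blockSize S c = 1) : (insertEmptyColumns f hS).inRightColumn c = f ⟨c, hc⟩ := by
  rw [RookPlacement.inRightColumn, deleteEmptyColumns_insertEmptyColumns]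
  obtain ⟨j, rfl⟩ := S.2.2.1.2 c
  simp only [S.2.2.1.1.eq_iff, exists_eq_left]
  change decide ((2 * _ + colOffset S f (S.1.2 j)) % 2 = 1) = _
  rw [colOffset, dif_pos hc]
  cases f ⟨_, hc⟩ <;> simp

def deleteEmptyColumnsFiberEquiv {n : ℕ} (S : FullPlacement n) (hS : ∀ c, blockSize S c ≤ 2) :
    {R : RookPlacement n // R.deleteEmptyColumns = S} ≃ ({c // blockSize S c = 1} → Bool) where
  toFun R c := R.1.inRightColumn c
  invFun f := ⟨insertEmptyColumns f hS, deleteEmptyColumns_insertEmptyColumns f hS⟩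
  left_inv := by
    rintro ⟨R, rfl⟩
    exact Subtype.ext R.insertEmptyColumns_deleteEmptyColumns
  right_inv f := funext fun c => inRightColumn_insertEmptyColumns hS f c c.2

end

/-- Summing `2^{bso S}` over all full rook placements `S` on `n`-row Young
diagrams all of whose blocks have size at most `2` (these are exactly the
images of the empty-column-deletion projection `Π_n` from rook placements on
`2δ_n`) gives `(n+1)!`. -/
theorem sum_two_pow_bso (n : ℕ) :
    ∑ S : {S : FullPlacement n // ∀ c : Fin n, blockSize S c ≤ 2},
        2 ^ bso S.1 = Nat.factorial (n + 1) := by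
  let π (R : RookPlacement n) : {S : FullPlacement n // ∀ c : Fin n, blockSize S c ≤ 2} :=
    ⟨R.deleteEmptyColumns, R.blockSize_deleteEmptyColumns_le_two⟩
  have hfiber (S : {S : FullPlacement n // ∀ c : Fin n, blockSize S c ≤ 2}) :
      Fintype.card {R // π R = S} = 2 ^ bso S.1 := by
    rw [Fintype.card_congr ((Equiv.subtypeEquivRight fun R => Subtype.ext_iff).trans
      (deleteEmptyColumnsFiberEquiv S.1 S.2)), Fintype.card_fun, Fintype.card_bool,
      Fintype.card_subtype]
    rfl
  simp_rw [← hfiber]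
  rw [← Fintype.card_sigma, Fintype.card_congr (Equiv.sigmaFiberEquiv π),
    RookPlacement.card_eq_factorial]
end

section
/- The image of the projection Π_n (which deletes all empty columns from a rook placement on the double staircase 2δ_n) is exactly the set of full rook placements S on Young diagrams with n rows such that every block of S has size at most 2. -/
attribute [local instance] Classical.propDecidable

/-- `Projects R S` says that `S` is obtained from the rook placement `R` on the
double staircase `2δ_n` by deleting all empty columns (the projection `Π_n`):
the length of row `i` of `S` is the number of occupied columns of `R` among the
`2(i+1)` columns of row `i`, and the column of the rook of row `i` in `S` is
the number of occupied columns of `R` strictly to the left of the rook of row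
`i` of `R`. -/
def Projects {n : ℕ} (R : RookPlacement n) (S : FullPlacement n) : Prop :=
  (∀ i : Fin n, (S.1.1 i : ℕ) =
      (Finset.univ.filter
        (fun c : Fin (2 * n) => Occupied R (c : ℕ) ∧ (c : ℕ) < 2 * (i.val + 1))).card) ∧
  (∀ i : Fin n, (S.1.2 i : ℕ) =
      (Finset.univ.filter
        (fun c : Fin (2 * n) => Occupied R (c : ℕ) ∧ (c : ℕ) < (R.1 i : ℕ))).card)

/-!
Let `ℓ j` be the length of row `j - 1` of `S`, so `ℓ 0 = 0` and `ℓ n = n`. Three adjacent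
columns have the same height exactly when no row length lies in a window `(x, x + 2]`, i.e. when
`ℓ` jumps by at least `3`; so all blocks have size at most `2` iff `ℓ (j + 1) ≤ ℓ j + 2` for all
`j < n`. If `S = Π_n(R)`, then `ℓ j` is the number of occupied columns among the first `2 j`
columns of `R`, and each block of two columns adds at most `2`. Conversely, if every jump is at
most `2`, occupy the first `ℓ (j + 1) - ℓ j` columns of block `j` of the staircase; then exactly
`ℓ j` of the first `2 j` columns are occupied, and putting the rook of row `i` into the
`(S.1.2 i)`-th occupied column gives a preimage of `S`.
-/

namespace Nat

variable {p : ℕ → Prop} [DecidablePred p] {k t : ℕ}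

theorem count_nth_of_lt_count (h : k < count p t) : count p (nth p k) = k :=
  count_nth fun hf => h.trans_le (count_le_card hf t)

theorem nth_mem_of_lt_count (h : k < count p t) : p (nth p k) :=
  nth_mem k fun hf => h.trans_le (count_le_card hf t)

theorem count_congr_of_lt {q : ℕ → Prop} [DecidablePred q] (h : ∀ c < t, (p c ↔ q c)) :
    count p t = count q t :=
  (count_mono_left fun c hc => (h c hc).1).antisymm (count_mono_left fun c hc => (h c hc).2)

end Nat

namespace RookProjection

open Finset Nat

section Staircase

variable {ℓ : ℕ → ℕ} {N : ℕ}

theorem exists_mem_Ioc_of_forall_le_add_two (h0 : ℓ 0 = 0) (hN : N ≤ ℓ N)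
    (hstep : ∀ j < N, ℓ (j + 1) ≤ ℓ j + 2) {x : ℕ} (hx : x < N) :
    ∃ j ≤ N, ℓ j ∈ Set.Ioc x (x + 2) := by
  by_contra! hmiss
  have hbelow : ∀ j ≤ N, ℓ j ≤ x := by
    intro j hj
    induction j with
    | zero => omega
    | succ j ih =>
      have := hstep j (by omega)
      have := ih (by omega)
      by_contra hlt
      exact hmiss (j + 1) hj ⟨by omega, by omega⟩
  have := hbelow N le_rfl
  omega

theorem le_add_two_of_forall_exists_mem_Ioc (hmono : Monotone ℓ) (hN : ℓ N ≤ N)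
    (hhit : ∀ x, x + 2 < N → ∃ j, ℓ j ∈ Set.Ioc x (x + 2)) {j : ℕ} (hj : j < N) :
    ℓ (j + 1) ≤ ℓ j + 2 := by
  by_contra! hjump
  have := hmono (show j + 1 ≤ N by omega)
  obtain ⟨k, hk₁, hk₂⟩ := hhit (ℓ j) (by omega)
  rcases le_or_gt k j with hkj | hkj
  · have := hmono hkj
    omega
  · have := hmono (show j + 1 ≤ k by omega)
    omega

/-- Column `c` lies in block `c / 2` and is one of its first `ℓ (c / 2 + 1) - ℓ (c / 2)`
columns. -/
def stairColumn (ℓ : ℕ → ℕ) (c : ℕ) : Prop :=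
  ℓ (c / 2) + c % 2 < ℓ (c / 2 + 1)

theorem count_stairColumn (hmono : Monotone ℓ) (h0 : ℓ 0 = 0)
    (hstep : ∀ j < N, ℓ (j + 1) ≤ ℓ j + 2) {j : ℕ} (hj : j ≤ N) :
    count (stairColumn ℓ) (2 * j) = ℓ j := by
  induction j with
  | zero => simp [h0]
  | succ j ih =>
    have := hmono (show j ≤ j + 1 by omega)
    have := hstep j (by omega)
    rw [show 2 * (j + 1) = 2 * j + 1 + 1 by ring, count_succ, count_succ, ih (by omega)]
    simp only [stairColumn, show (2 * j + 1) / 2 = j by omega, show (2 * j + 1) % 2 = 1 by omega,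
      show 2 * j / 2 = j by omega, show 2 * j % 2 = 0 by omega]
    split_ifs <;> omega

end Staircase

variable {n : ℕ}

theorem lt_of_occupied {R : RookPlacement n} {c : ℕ} (h : Occupied R c) : c < 2 * n := by
  obtain ⟨j, rfl⟩ := h
  exact (R.1 j).2

theorem card_filter_occupied_lt (R : RookPlacement n) (t : ℕ) :
    (univ.filter fun c : Fin (2 * n) => Occupied R c ∧ (c : ℕ) < t).card =
      count (Occupied R) t := by
  rw [count_eq_card_filter_range]
  refine card_nbij (fun c => (c : ℕ)) (fun c hc => ?_) (fun a _ b _ h => Fin.ext h) (fun c hc => ?_)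
  · simp only [coe_filter, mem_univ, true_and, Set.mem_ofPred_eq, mem_range] at hc ⊢
    exact ⟨hc.2, hc.1⟩
  · simp only [coe_filter, mem_range, Set.mem_ofPred_eq, Set.mem_image, mem_univ, true_and] at hc ⊢
    exact ⟨⟨c, lt_of_occupied hc.2⟩, ⟨hc.2, hc.1⟩, rfl⟩

theorem projects_iff (R : RookPlacement n) (S : FullPlacement n) :
    Projects R S ↔ (∀ i, (S.1.1 i : ℕ) = count (Occupied R) (2 * (i + 1))) ∧
      ∀ i, (S.1.2 i : ℕ) = count (Occupied R) (R.1 i) := by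
  simp only [Projects, card_filter_occupied_lt]

/-- The length of row `j - 1` of `S`, where row `-1` is empty and rows below the diagram have
length `n`. -/
def prevRowLen (S : FullPlacement n) : ℕ → ℕ
  | 0 => 0
  | j + 1 => if h : j < n then S.1.1 ⟨j, h⟩ else n

variable (S : FullPlacement n)

@[simp]
theorem prevRowLen_zero : prevRowLen S 0 = 0 := rfl

@[simp]
theorem prevRowLen_succ (i : Fin n) : prevRowLen S (i + 1) = S.1.1 i := by
  simp [prevRowLen]

theorem prevRowLen_monotone : Monotone (prevRowLen S) := by
  refine monotone_nat_of_le_succ fun j => ?_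
  rcases j with _ | j
  · exact Nat.zero_le _
  · simp only [prevRowLen]
    split_ifs with h₁ h₂ h₂
    · exact S.2.1 _ _ (Fin.mk_le_mk.2 (by omega))
    · exact Nat.lt_succ_iff.1 (S.1.1 _).2
    · omega
    · exact le_rfl

theorem prevRowLen_self : prevRowLen S n = n := by
  rcases n with _ | m
  · rfl
  · have hlast : prevRowLen S (m + 1) = S.1.1 (Fin.last m) := prevRowLen_succ S (Fin.last m)
    rw [hlast]
    refine le_antisymm (Nat.lt_succ_iff.1 (S.1.1 _).2) ?_
    -- the rook in the last column sits in a row no longer than the last row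
    obtain ⟨i, hi⟩ := S.2.2.1.2 (Fin.last m)
    have hrook := S.2.2.2 i
    have hrow : (S.1.1 i : ℕ) ≤ S.1.1 (Fin.last m) := S.2.1 i _ (Fin.le_last i)
    rw [hi, Fin.val_last] at hrook
    omega

theorem colHeight_eq_colHeight_iff {c c' : Fin n} (h : c ≤ c') :
    colHeight S c = colHeight S c' ↔ ∀ i, (S.1.1 i : ℕ) ∉ Set.Ioc (c : ℕ) c' := by
  have hc : (c : ℕ) ≤ c' := h
  have hsub : univ.filter (fun i : Fin n => (c' : ℕ) < S.1.1 i) ⊆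
      univ.filter (fun i : Fin n => (c : ℕ) < S.1.1 i) := by
    intro i
    simp only [mem_filter, mem_univ, true_and]
    omega
  constructor
  · intro heq i hi
    have hset := eq_of_subset_of_card_le hsub heq.le
    have hmem : i ∈ univ.filter (fun i : Fin n => (c : ℕ) < S.1.1 i) := by simp [hi.1]
    rw [← hset, mem_filter] at hmem
    exact absurd hi.2 (not_le.2 hmem.2)
  · intro hgap
    unfold colHeight
    congr 1
    ext i
    have := hgap i
    simp only [mem_filter, mem_univ, true_and, Set.mem_Ioc] at this ⊢
    omega

theorem exists_two_lt_blockSize_iff :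
    (∃ c, 2 < blockSize S c) ↔ ∃ x, x + 2 < n ∧ ∀ i, (S.1.1 i : ℕ) ∉ Set.Ioc x (x + 2) := by
  constructor
  · rintro ⟨c, hc⟩
    set T := univ.filter fun c' => colHeight S c' = colHeight S c
    have hT : T.Nonempty := card_pos.1 (two_pos.trans hc)
    have hxy : T ⊆ Icc (T.min' hT) (T.max' hT) :=
      fun z hz => mem_Icc.2 ⟨min'_le T z hz, le_max' T z hz⟩
    have hspread := (card_le_card hxy).trans_lt' hc
    rw [Fin.card_Icc] at hspread
    have hmin := (mem_filter.1 (min'_mem T hT)).2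
    have hmax := (mem_filter.1 (max'_mem T hT)).2
    have hgap := (colHeight_eq_colHeight_iff S (min'_le T _ (max'_mem T hT))).1
      (hmin.trans hmax.symm)
    refine ⟨T.min' hT, by omega, fun i hi => hgap i ⟨hi.1, by have := hi.2; omega⟩⟩
  · rintro ⟨x, hx, hgap⟩
    refine ⟨⟨x, by omega⟩, ?_⟩
    have hsub : Icc (⟨x, by omega⟩ : Fin n) ⟨x + 2, hx⟩ ⊆
        univ.filter fun c' => colHeight S c' = colHeight S ⟨x, by omega⟩ := by
      intro z hz
      obtain ⟨hxz, hzx⟩ := mem_Icc.1 hz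
      refine mem_filter.2 ⟨mem_univ z, ((colHeight_eq_colHeight_iff S hxz).2 fun i hi => ?_).symm⟩
      exact hgap i ⟨hi.1, hi.2.trans (Fin.le_iff_val_le_val.1 hzx)⟩
    have := card_le_card hsub
    simp only [Fin.card_Icc] at this
    unfold blockSize
    omega

theorem forall_blockSize_le_two_iff :
    (∀ c, blockSize S c ≤ 2) ↔ ∀ j < n, prevRowLen S (j + 1) ≤ prevRowLen S j + 2 := by
  have hhit : (∀ c, blockSize S c ≤ 2) ↔
      ∀ x, x + 2 < n → ∃ i : Fin n, (S.1.1 i : ℕ) ∈ Set.Ioc x (x + 2) := by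
    simpa [not_lt] using (exists_two_lt_blockSize_iff S).not
  rw [hhit]
  constructor
  · intro h j hj
    refine le_add_two_of_forall_exists_mem_Ioc (prevRowLen_monotone S) (prevRowLen_self S).le
      (fun x hx => ?_) hj
    obtain ⟨i, hi⟩ := h x hx
    exact ⟨i + 1, by rwa [prevRowLen_succ]⟩
  · intro h x hx
    obtain ⟨j, hjn, hj⟩ := exists_mem_Ioc_of_forall_le_add_two (prevRowLen_zero S)
      (prevRowLen_self S).ge h (show x < n by omega)
    rcases j with _ | i
    · simp at hj
    · exact ⟨⟨i, by omega⟩, by rwa [← prevRowLen_succ]⟩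

theorem prevRowLen_succ_le_of_projects {R : RookPlacement n} (hR : Projects R S) {j : ℕ}
    (hj : j < n) : prevRowLen S (j + 1) ≤ prevRowLen S j + 2 := by
  have hcount : ∀ j ≤ n, prevRowLen S j = count (Occupied R) (2 * j) := by
    rintro (_ | i) hi
    · simp
    · rw [← ((projects_iff R S).1 hR).1 ⟨i, hi⟩]
      exact prevRowLen_succ S ⟨i, hi⟩
  rw [hcount j hj.le, hcount (j + 1) hj, mul_add, mul_one, count_add]
  exact Nat.add_le_add_left (count_le _) _

theorem count_stairColumn_prevRowLen (hS : ∀ j < n, prevRowLen S (j + 1) ≤ prevRowLen S j + 2)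
    {j : ℕ} (hj : j ≤ n) : count (stairColumn (prevRowLen S)) (2 * j) = prevRowLen S j :=
  count_stairColumn (prevRowLen_monotone S) (prevRowLen_zero S) hS hj

theorem lt_count_stairColumn (hS : ∀ j < n, prevRowLen S (j + 1) ≤ prevRowLen S j + 2)
    (k : Fin n) : (k : ℕ) < count (stairColumn (prevRowLen S)) (2 * n) := by
  rw [count_stairColumn_prevRowLen S hS le_rfl, prevRowLen_self]
  exact k.2

noncomputable def liftPlacement (hS : ∀ j < n, prevRowLen S (j + 1) ≤ prevRowLen S j + 2) :
    RookPlacement n :=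
  ⟨fun i => ⟨nth (stairColumn (prevRowLen S)) (S.1.2 i),
      nth_lt_of_lt_count (lt_count_stairColumn S hS _)⟩,
    fun a b hab => S.2.2.1.1 <| Fin.ext <| by
      have := congrArg (fun c : Fin (2 * n) => count (stairColumn (prevRowLen S)) c) hab
      simpa only [count_nth_of_lt_count (lt_count_stairColumn S hS _)] using this,
    fun i => nth_lt_of_lt_count <| by
      rw [count_stairColumn_prevRowLen S hS i.2, prevRowLen_succ]
      exact S.2.2.2 i⟩

theorem occupied_liftPlacement_iff (hS : ∀ j < n, prevRowLen S (j + 1) ≤ prevRowLen S j + 2)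
    {c : ℕ} (hc : c < 2 * n) :
    Occupied (liftPlacement S hS) c ↔ stairColumn (prevRowLen S) c := by
  constructor
  · rintro ⟨j, rfl⟩
    exact nth_mem_of_lt_count (lt_count_stairColumn S hS _)
  · intro hstair
    have hlt := (count_strict_mono hstair hc).trans_eq
      ((count_stairColumn_prevRowLen S hS le_rfl).trans (prevRowLen_self S))
    obtain ⟨j, hj⟩ := S.2.2.1.2 ⟨_, hlt⟩
    exact ⟨j, by simp [liftPlacement, hj, nth_count hstair]⟩

theorem liftPlacement_projects (hS : ∀ j < n, prevRowLen S (j + 1) ≤ prevRowLen S j + 2) :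
    Projects (liftPlacement S hS) S := by
  refine (projects_iff _ S).2 ⟨fun i => ?_, fun i => ?_⟩
  · rw [count_congr_of_lt fun c hc => occupied_liftPlacement_iff S hS (by omega),
      count_stairColumn_prevRowLen S hS i.2, prevRowLen_succ]
  · have hrook : ((liftPlacement S hS).1 i : ℕ) = nth (stairColumn (prevRowLen S)) (S.1.2 i) := rfl
    rw [count_congr_of_lt fun c hc => occupied_liftPlacement_iff S hS (hc.trans (Fin.is_lt _)),
      hrook, count_nth_of_lt_count (lt_count_stairColumn S hS _)]

end RookProjection

/-- The image of the projection `Π_n` (deleting all empty columns of a rook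
placement on the double staircase `2δ_n`) is exactly the set of full rook
placements `S` on Young diagrams with `n` rows all of whose blocks have size
at most `2`. -/
theorem image_of_projection (n : ℕ) (S : FullPlacement n) :
    (∃ R : RookPlacement n, Projects R S) ↔ ∀ c : Fin n, blockSize S c ≤ 2 := by
  rw [RookProjection.forall_blockSize_le_two_iff]
  exact ⟨fun ⟨R, hR⟩ _ hj => RookProjection.prevRowLen_succ_le_of_projects S hR hj,
    fun hS => ⟨_, RookProjection.liftPlacement_projects S hS⟩⟩
end
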